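/- Let K_{1,n} be the star with n ≥ 3 leaves. Then C_{2,1}^T(K_{1,n}) = n + 2. -/

import Mathlib

open SimpleGraph

/-- A (p,1)-total labelling of `G`: adjacent vertices get distinct colors, edges sharing an
endpoint get distinct colors, and a vertex and an incident edge differ by at least `p`. -/
def IsPOneTotalLabelling {V : Type*} (G : SimpleGraph V) (p : ℕ)
    (cv : V → ℤ) (ce : G.edgeSet → ℤ) : Prop :=
  (∀ u v : V, G.Adj u v → cv u ≠ cv v) ∧
  (∀ e f : G.edgeSet, e ≠ f → (∃ v : V, v ∈ (e : Sym2 V) ∧ v ∈ (f : Sym2 V)) → ce e ≠ ce f) ∧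
  (∀ (v : V) (e : G.edgeSet), v ∈ (e : Sym2 V) → (p : ℤ) ≤ |cv v - ce e|)

/-- χ_{p,1}^T(G): least `k` such that `G` has a (p,1)-total labelling with colors in
`{0, …, k-1}`. -/
noncomputable def pOneTotalChromatic {V : Type*} (G : SimpleGraph V) (p : ℕ) : ℕ :=
  sInf {k : ℕ | ∃ cv ce, IsPOneTotalLabelling G p cv ce ∧
    (∀ v : V, cv v ∈ Set.Ico (0 : ℤ) k) ∧ (∀ e : G.edgeSet, ce e ∈ Set.Ico (0 : ℤ) k)}

/-- λ_p^T(G): least `k` such that `G` has a (p,1)-total labelling with colors in `{0, …, k}`. -/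
noncomputable def pOneTotalNumber {V : Type*} (G : SimpleGraph V) (p : ℕ) : ℕ :=
  sInf {k : ℕ | ∃ cv ce, IsPOneTotalLabelling G p cv ce ∧
    (∀ v : V, cv v ∈ Set.Icc (0 : ℤ) k) ∧ (∀ e : G.edgeSet, ce e ∈ Set.Icc (0 : ℤ) k)}

/-- `G` is `L`-(p,1)-total labelable for list assignment `(Lv, Le)`. -/
def ListPOneTotalLabelable {V : Type*} (G : SimpleGraph V) (p : ℕ)
    (Lv : V → Finset ℤ) (Le : G.edgeSet → Finset ℤ) : Prop :=
  ∃ cv ce, IsPOneTotalLabelling G p cv ce ∧ (∀ v, cv v ∈ Lv v) ∧ (∀ e, ce e ∈ Le e)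

/-- C_{p,1}^T(G): least `k` such that `G` is `L`-(p,1)-total labelable for every list
assignment whose lists all have size `k`. -/
noncomputable def pOneTotalChoosability {V : Type*} (G : SimpleGraph V) (p : ℕ) : ℕ :=
  sInf {k : ℕ | ∀ (Lv : V → Finset ℤ) (Le : G.edgeSet → Finset ℤ),
    (∀ v, (Lv v).card = k) → (∀ e, (Le e).card = k) → ListPOneTotalLabelable G p Lv Le}

/-- An L(p,q)-labelling of `H`. -/
def IsLpqLabelling {V : Type*} (H : SimpleGraph V) (p q : ℕ) (f : V → ℤ) : Prop :=
  (∀ u v : V, H.Adj u v → (p : ℤ) ≤ |f u - f v|) ∧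
  (∀ u v : V, H.dist u v = 2 → (q : ℤ) ≤ |f u - f v|)

/-- χ^{p,q}(H): least `k` such that `H` has an L(p,q)-labelling with colors in `{0, …, k-1}`. -/
noncomputable def LpqChromatic {V : Type*} (H : SimpleGraph V) (p q : ℕ) : ℕ :=
  sInf {k : ℕ | ∃ f, IsLpqLabelling H p q f ∧ ∀ v : V, f v ∈ Set.Ico (0 : ℤ) k}

/-- χ_l^{p,q}(H): least `k` such that from every assignment of lists of size `k`, `H` has an
L(p,q)-labelling choosing each vertex's color from its list. -/
noncomputable def listLpqChromatic {V : Type*} (H : SimpleGraph V) (p q : ℕ) : ℕ :=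
  sInf {k : ℕ | ∀ L : V → Finset ℤ, (∀ v, (L v).card = k) →
    ∃ f, IsLpqLabelling H p q f ∧ ∀ v : V, f v ∈ L v}

/-- The star `K_{1,n}`: vertex `0` is the center, adjacent to the `n` leaves. -/
def starGraphK (n : ℕ) : SimpleGraph (Fin (n + 1)) :=
  SimpleGraph.fromRel (fun v w => v = 0 ∨ w = 0)

/-- The incidence graph `S_I(G)`: replace every edge of `G` by a path of length 2. -/
def incidenceGraph {V : Type*} (G : SimpleGraph V) : SimpleGraph (V ⊕ G.edgeSet) where
  Adj x y :=
    (∃ (v : V) (e : G.edgeSet), x = Sum.inl v ∧ y = Sum.inr e ∧ v ∈ (e : Sym2 V)) ∨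
    (∃ (v : V) (e : G.edgeSet), x = Sum.inr e ∧ y = Sum.inl v ∧ v ∈ (e : Sym2 V))
  symm := by
    constructor
    rintro x y (⟨v, e, rfl, rfl, h⟩ | ⟨v, e, rfl, rfl, h⟩)
    · exact Or.inr ⟨v, e, rfl, rfl, h⟩
    · exact Or.inl ⟨v, e, rfl, rfl, h⟩
  loopless := by
    constructor
    rintro x (⟨v, e, h1, h2, -⟩ | ⟨v, e, h1, h2, -⟩) <;> subst h1 <;> simp at h2

/-- `H` is a minor of `G`: there are pairwise disjoint nonempty connected branch sets in `G`,
one for each vertex of `H`, with an edge of `G` between the branch sets of any two vertices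
adjacent in `H`. -/
def IsGraphMinor {W V : Type*} (H : SimpleGraph W) (G : SimpleGraph V) : Prop :=
  ∃ B : W → Set V,
    (∀ w, (B w).Nonempty) ∧
    (∀ w, (G.induce (B w)).Connected) ∧
    (∀ w₁ w₂, w₁ ≠ w₂ → Disjoint (B w₁) (B w₂)) ∧
    (∀ w₁ w₂, H.Adj w₁ w₂ → ∃ v₁ ∈ B w₁, ∃ v₂ ∈ B w₂, G.Adj v₁ v₂)

/-- A graph is outerplanar iff it has neither `K₄` nor `K_{2,3}` as a minor. -/
def Outerplanar {V : Type*} (G : SimpleGraph V) : Prop :=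
  ¬ IsGraphMinor (completeGraph (Fin 4)) G ∧
  ¬ IsGraphMinor (completeBipartiteGraph (Fin 2) (Fin 3)) G
/-!
A labelling of the star is a color `c` for the center, pairwise distinct edge colors outside
the window `[c - 1, c + 1]`, and for each leaf a color different from `c` and outside the window
around its edge color.

Upper bound: fix an edge `e₀` and choose `c` in the center's list with `{c, c + 1}` not inside
the list of `e₀`; it exists because a list containing `A ∪ {max A + 1}` is longer than `A`.
The window around `c` then removes at most two colors from the list of `e₀` and at most three
from every other edge list, so `e₀` keeps `n` colors and the other edges `n - 1`, which is
Hall's condition for `n` edges. The leaves come last: each loses at most four of its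
`n + 2 ≥ 5` colors.

Lower bound: with all lists equal to `{0, …, k - 1}`, the window around the center color
leaves at most `k - 2` of these colors for the `n` edges.
-/

open Finset

theorem exists_injective_mem_of_card_sub_one_le {ι α : Type*} [Fintype ι] [DecidableEq α]
    (t : ι → Finset α) (i₀ : ι) (h₀ : Fintype.card ι ≤ #(t i₀))
    (h : ∀ i, Fintype.card ι - 1 ≤ #(t i)) :
    ∃ f : ι → α, Function.Injective f ∧ ∀ i, f i ∈ t i := by
  classical
  refine (all_card_le_biUnion_card_iff_existsInjective' t).mp fun s => ?_
  by_cases hi₀ : i₀ ∈ s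
  · calc #s ≤ Fintype.card ι := card_le_univ s
      _ ≤ #(t i₀) := h₀
      _ ≤ #(s.biUnion t) := card_le_card (subset_biUnion_of_mem t hi₀)
  · obtain rfl | ⟨i, hi⟩ := s.eq_empty_or_nonempty
    · simp
    have hs := card_lt_univ_of_notMem hi₀
    calc #s ≤ Fintype.card ι - 1 := by omega
      _ ≤ #(t i) := h i
      _ ≤ #(s.biUnion t) := card_le_card (subset_biUnion_of_mem t hi)

theorem exists_mem_Icc_add_one_not_subset {A B : Finset ℤ} (hA : A.Nonempty) (hAB : #B ≤ #A) :
    ∃ c ∈ A, ¬ Icc c (c + 1) ⊆ B := by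
  by_contra! h
  have hmax : A.max' hA + 1 ∉ A := fun hm => by linarith [A.le_max' _ hm]
  have hsub : insert (A.max' hA + 1) A ⊆ B := by
    refine insert_subset ((h _ (A.max'_mem hA)) (by simp)) fun c hc => h c hc (by simp)
  have := card_le_card hsub
  rw [card_insert_of_notMem hmax] at this
  omega

theorem two_le_abs_sub_iff_notMem_Icc {c x : ℤ} : 2 ≤ |c - x| ↔ x ∉ Icc (c - 1) (c + 1) := by
  rw [le_abs, mem_Icc]
  omega

theorem card_sub_three_le_card_sdiff_Icc (B : Finset ℤ) (c : ℤ) :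
    #B - 3 ≤ #(B \ Icc (c - 1) (c + 1)) := by
  have := le_card_sdiff (Icc (c - 1) (c + 1)) B
  rw [Int.card_Icc] at this
  omega

theorem card_sub_two_le_card_sdiff_Icc {B : Finset ℤ} {c : ℤ} (h : ¬ Icc c (c + 1) ⊆ B) :
    #B - 2 ≤ #(B \ Icc (c - 1) (c + 1)) := by
  obtain ⟨x, hx, hxB⟩ := not_subset.mp h
  have hlt : #(Icc (c - 1) (c + 1) ∩ B) < #(Icc (c - 1) (c + 1)) := by
    refine card_lt_card ⟨inter_subset_left, fun hsub => hxB (mem_of_mem_inter_right (hsub ?_))⟩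
    simp only [mem_Icc] at hx ⊢
    omega
  simp only [Int.card_Icc] at hlt
  rw [card_sdiff]
  omega

theorem card_Ico_sdiff_Icc_le {k : ℕ} {c : ℤ} (hc : c ∈ Ico (0 : ℤ) k) :
    #(Ico (0 : ℤ) k \ Icc (c - 1) (c + 1)) ≤ k - 2 := by
  have hsub : Ico (0 : ℤ) k \ Icc (c - 1) (c + 1) ⊆ Ico 0 (c - 1) ∪ Ico (c + 2) k := by
    intro x
    simp only [mem_sdiff, mem_Ico, mem_Icc, mem_union]
    omega
  have := (card_le_card hsub).trans (card_union_le _ _)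
  simp only [Int.card_Ico, mem_Ico] at this hc
  omega

namespace starGraphK

variable {n : ℕ}

theorem adj_iff {v w : Fin (n + 1)} : (starGraphK n).Adj v w ↔ v ≠ w ∧ (v = 0 ∨ w = 0) := by
  simp only [starGraphK, SimpleGraph.fromRel_adj]
  tauto

theorem adj_zero_succ (i : Fin n) : (starGraphK n).Adj 0 i.succ :=
  adj_iff.mpr ⟨(Fin.succ_ne_zero i).symm, Or.inl rfl⟩

def leafEdge (i : Fin n) : (starGraphK n).edgeSet :=
  ⟨s(0, i.succ), adj_zero_succ i⟩

theorem leafEdge_bijective : Function.Bijective (leafEdge (n := n)) := by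
  refine ⟨fun i j hij => Fin.succ_injective _ ?_, fun ⟨e, he⟩ => ?_⟩
  · exact Sym2.congr_right.mp (congrArg Subtype.val hij)
  induction e using Sym2.ind with
  | _ v w =>
    obtain ⟨hvw, rfl | rfl⟩ := adj_iff.mp he
    · obtain ⟨i, rfl⟩ := Fin.exists_succ_eq.mpr hvw.symm
      exact ⟨i, rfl⟩
    · obtain ⟨i, rfl⟩ := Fin.exists_succ_eq.mpr hvw
      exact ⟨i, Subtype.ext Sym2.eq_swap⟩

noncomputable def leafEdgeEquiv (n : ℕ) : Fin n ≃ (starGraphK n).edgeSet :=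
  Equiv.ofBijective leafEdge leafEdge_bijective

theorem isPOneTotalLabelling_iff (p : ℕ) (cv : Fin (n + 1) → ℤ)
    (ce : (starGraphK n).edgeSet → ℤ) :
    IsPOneTotalLabelling (starGraphK n) p cv ce ↔
      Function.Injective (fun i => ce (leafEdge i)) ∧
      ∀ i : Fin n, cv 0 ≠ cv i.succ ∧ (p : ℤ) ≤ |cv 0 - ce (leafEdge i)| ∧
        (p : ℤ) ≤ |cv i.succ - ce (leafEdge i)| := by
  have mem_leafEdge {v : Fin (n + 1)} {i : Fin n} :
      v ∈ (leafEdge i : Sym2 (Fin (n + 1))) ↔ v = 0 ∨ v = i.succ :=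
    Sym2.mem_iff
  constructor
  · rintro ⟨hadj, hedge, hinc⟩
    refine ⟨fun i j hij => leafEdge_bijective.injective ?_, fun i =>
      ⟨hadj _ _ (adj_zero_succ i), hinc _ _ (mem_leafEdge.mpr (Or.inl rfl)),
        hinc _ _ (mem_leafEdge.mpr (Or.inr rfl))⟩⟩
    by_contra hne
    exact hedge _ _ hne ⟨0, mem_leafEdge.mpr (Or.inl rfl), mem_leafEdge.mpr (Or.inl rfl)⟩ hij
  · rintro ⟨hinj, h⟩
    refine ⟨fun u v huv => ?_, fun e f hef _ => ?_, fun v e hv => ?_⟩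
    · obtain ⟨hne, rfl | rfl⟩ := adj_iff.mp huv
      · obtain ⟨i, rfl⟩ := Fin.exists_succ_eq.mpr hne.symm
        exact (h i).1
      · obtain ⟨i, rfl⟩ := Fin.exists_succ_eq.mpr hne
        exact (h i).1.symm
    · obtain ⟨i, rfl⟩ := leafEdge_bijective.surjective e
      obtain ⟨j, rfl⟩ := leafEdge_bijective.surjective f
      exact fun hij => hef (congrArg _ (hinj hij))
    · obtain ⟨i, rfl⟩ := leafEdge_bijective.surjective e
      rcases mem_leafEdge.mp hv with rfl | rfl
      exacts [(h i).2.1, (h i).2.2]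

theorem listPOneTotalLabelable_two (hn : 3 ≤ n) (Lv : Fin (n + 1) → Finset ℤ)
    (Le : (starGraphK n).edgeSet → Finset ℤ) (hLv : ∀ v, #(Lv v) = n + 2)
    (hLe : ∀ e, #(Le e) = n + 2) : ListPOneTotalLabelable (starGraphK n) 2 Lv Le := by
  let i₀ : Fin n := ⟨0, by omega⟩
  obtain ⟨c, hc, hc₀⟩ := exists_mem_Icc_add_one_not_subset (A := Lv 0) (B := Le (leafEdge i₀))
    (card_pos.mp (by rw [hLv]; omega)) (by rw [hLv, hLe])
  obtain ⟨f, hf_inj, hf⟩ := exists_injective_mem_of_card_sub_one_le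
      (fun i => Le (leafEdge i) \ Icc (c - 1) (c + 1)) i₀
      (by simpa [hLe] using card_sub_two_le_card_sdiff_Icc hc₀)
      (fun i => by simpa [hLe] using card_sub_three_le_card_sdiff_Icc (Le (leafEdge i)) c)
  have hleaf (i : Fin n) : (Lv i.succ \ insert c (Icc (f i - 1) (f i + 1))).Nonempty := by
    rw [← card_pos]
    have hsdiff := le_card_sdiff (insert c (Icc (f i - 1) (f i + 1))) (Lv i.succ)
    have hinsert := card_insert_le c (Icc (f i - 1) (f i + 1))
    rw [Int.card_Icc] at hinsert
    rw [hLv] at hsdiff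
    omega
  choose g hg using hleaf
  have hce (i : Fin n) : (f ∘ (leafEdgeEquiv n).symm) (leafEdge i) = f i :=
    congrArg f ((leafEdgeEquiv n).symm_apply_apply i)
  refine ⟨Fin.cases c g, f ∘ (leafEdgeEquiv n).symm,
    (isPOneTotalLabelling_iff 2 _ _).mpr ⟨?_, fun i => ?_⟩, Fin.cases hc ?_, ?_⟩
  · simpa only [hce] using hf_inj
  · simp only [mem_sdiff, mem_insert, not_or] at hg hf
    simp only [Fin.cases_zero, Fin.cases_succ, hce, Nat.cast_ofNat, abs_sub_comm (g i),
      two_le_abs_sub_iff_notMem_Icc]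
    exact ⟨Ne.symm (hg i).2.1, (hf i).2, (hg i).2.2⟩
  · intro e
    obtain ⟨i, rfl⟩ := leafEdge_bijective.surjective e
    exact hce i ▸ (mem_sdiff.mp (hf i)).1
  · exact fun i => (mem_sdiff.mp (hg i)).1

theorem not_listPOneTotalLabelable_Ico (hn : 0 < n) {k : ℕ} (hk : k ≤ n + 1) :
    ¬ ListPOneTotalLabelable (starGraphK n) 2 (fun _ => Ico 0 k) (fun _ => Ico 0 k) := by
  rintro ⟨cv, ce, hlab, hcv, hce⟩
  obtain ⟨hinj, h⟩ := (isPOneTotalLabelling_iff 2 cv ce).mp hlab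
  have hmaps (i : Fin n) : ce (leafEdge i) ∈ Ico (0 : ℤ) k \ Icc (cv 0 - 1) (cv 0 + 1) :=
    mem_sdiff.mpr ⟨hce _, two_le_abs_sub_iff_notMem_Icc.mp (h i).2.1⟩
  have := card_le_card_of_injOn (s := univ) _ (fun i _ => hmaps i) hinj.injOn
  have := card_Ico_sdiff_Icc_le (hcv 0)
  simp only [card_univ, Fintype.card_fin] at *
  omega

end starGraphK

/-- C_{2,1}^T(K_{1,n}) = n + 2 for n ≥ 3. -/
theorem pOneTotalChoosability_starGraph_two (n : ℕ) (hn : 3 ≤ n) :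
    pOneTotalChoosability (starGraphK n) 2 = n + 2 := by
  have hchoosable := starGraphK.listPOneTotalLabelable_two hn
  refine le_antisymm (Nat.sInf_le hchoosable) (le_csInf ⟨_, hchoosable⟩ fun k hk => ?_)
  by_contra! hlt
  exact starGraphK.not_listPOneTotalLabelable_Ico (by omega) (by omega)
    (hk (fun _ => Ico 0 k) (fun _ => Ico 0 k) (fun _ => by simp) (fun _ => by simp))
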